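/- Let d be a positive integer and let γ = (e f; v h) ∈ SL₂(ℤ) (so eh − fv = 1). Set s = gcd(d, v), d₁ = d/s and v₁ = v/s. Then there exist a matrix α ∈ SL₂(ℤ) and an integer k such that (d 0; 0 1)·γ = α·(s k; 0 d₁), where α can be taken of the form (d₁e b; v₁ a) with a·d₁·e − b·v₁ = 1. -/

import Mathlib

/-! Write `d = s d₁`, `v = s v₁`. Since `d₁` and `v₁` are coprime there is a Bézout relation
`x d₁ + y v₁ = 1`, and `α = (d₁ e, f s - e h y; v₁, h x)` works with `k = h y`: its determinant is
`e h (x d₁ + y v₁) - f s v₁ = e h - f v = 1`. -/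

section Decomposition

variable {R : Type*} [CommRing R] {s d₁ v₁ e f h x y : R}

theorem det_eq_of_bezout (hxy : x * d₁ + y * v₁ = 1) :
    (h * x) * (d₁ * e) - (f * s - e * (h * y)) * v₁ = e * h - f * (s * v₁) := by
  linear_combination e * h * hxy

theorem diag_mul_eq_mul_upperTriangular_of_bezout (hxy : x * d₁ + y * v₁ = 1) :
    !![s * d₁, 0; 0, 1] * !![e, f; s * v₁, h] =
      !![d₁ * e, f * s - e * (h * y); v₁, h * x] * !![s, h * y; 0, d₁] := by
  have h₂₂ : v₁ * (h * y) + h * x * d₁ = h := by linear_combination h * hxy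
  rw [Matrix.mul_fin_two, Matrix.mul_fin_two, h₂₂]
  ring_nf

end Decomposition

theorem Int.isCoprime_div_gcd_div_gcd {d v : ℤ} (hd : d ≠ 0) :
    IsCoprime (d / (Int.gcd d v : ℤ)) (v / (Int.gcd d v : ℤ)) :=
  Int.isCoprime_iff_gcd_eq_one.mpr <|
    Int.gcd_div_gcd_div_gcd (Int.gcd_pos_of_ne_zero_left v hd)

/-- Let `d > 0` and `γ = (e f; v h) ∈ SL₂(ℤ)`, i.e. `eh − fv = 1`. With
`s = gcd(d, v)`, `d₁ = d/s`, `v₁ = v/s`, there exist integers `a, b, k` with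
`a·(d₁e) − b·v₁ = 1` (so that `α = (d₁e b; v₁ a) ∈ SL₂(ℤ)`) such that
`(d 0; 0 1)·γ = α·(s k; 0 d₁)`. -/
theorem matrix_decomposition_sl2 (d e f v h : ℤ) (hd : 0 < d)
    (hdet : e * h - f * v = 1) :
    ∃ a b k : ℤ,
      a * ((d / (Int.gcd d v : ℤ)) * e) - b * (v / (Int.gcd d v : ℤ)) = 1 ∧
      !![d, 0; 0, 1] * !![e, f; v, h] =
        !![(d / (Int.gcd d v : ℤ)) * e, b; v / (Int.gcd d v : ℤ), a] *
          !![(Int.gcd d v : ℤ), k; 0, d / (Int.gcd d v : ℤ)] := by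
  set s : ℤ := (Int.gcd d v : ℤ)
  obtain ⟨x, y, hxy⟩ := Int.isCoprime_div_gcd_div_gcd (v := v) hd.ne'
  have hd_eq : s * (d / s) = d := Int.mul_ediv_cancel' (Int.gcd_dvd_left d v)
  have hv_eq : s * (v / s) = v := Int.mul_ediv_cancel' (Int.gcd_dvd_right d v)
  refine ⟨h * x, f * s - e * (h * y), h * y, ?_, ?_⟩
  · rw [det_eq_of_bezout hxy, hv_eq, hdet]
  · conv_lhs => rw [← hd_eq, ← hv_eq]
    exact diag_mul_eq_mul_upperTriangular_of_bezout hxy
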